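/- arXiv:2509.21519 — 4 statements merged into one kernel-verified Lean document; each statement's English description precedes it below -/
import Mathlib

section
/- In the weighted coupon collector problem with L coupons of probabilities p₁, ..., p_L summing to 1, the expected time T₀ to collect all coupons satisfies T₀ ≥ max(1/min_l p_l, L·Σ_{l=1}^{L} 1/l), with the second bound attained with equality if and only if all p_l = 1/L. -/
/-!
Poissonize the draws: if coupon `l` arrives at the times of a rate-`pₗ` Poisson process, the
probability that some coupon is still missing at time `t` is `1 - ∏ₗ (1 - e^{-pₗ t})`, and
`T₀` is its integral over `t > 0`. This integrand is at least `e^{-pₗ t}` for every `l`, which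
gives `T₀ ≥ 1 / pₗ`. Writing the product as `exp (∑ₗ log (1 - e^{-pₗ t}))`, strict concavity
of `p ↦ log (1 - e^{-pt})` and Jensen's inequality show that, among distributions, the
integrand is pointwise smallest at the uniform one, strictly so unless `p` is uniform. For
the uniform distribution, expanding `1 - (1 - e^{-t/L})^L` as a geometric sum gives the
integral `L ∑_{k ≤ L} 1/k`.
-/

open Real MeasureTheory Set Filter

noncomputable def missingProb {ι : Type*} [Fintype ι] (p : ι → ℝ) (t : ℝ) : ℝ :=
  1 - ∏ l, (1 - exp (-(p l * t)))

lemma one_sub_prod_one_sub_le_sum {ι : Type*} (s : Finset ι) {a : ι → ℝ}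
    (h0 : ∀ i ∈ s, 0 ≤ a i) (h1 : ∀ i ∈ s, a i ≤ 1) :
    1 - ∏ i ∈ s, (1 - a i) ≤ ∑ i ∈ s, a i := by
  induction s using Finset.cons_induction with
  | empty => simp
  | cons j s hj ih =>
    simp only [Finset.mem_cons, forall_eq_or_imp] at h0 h1
    have hP : ∏ i ∈ s, (1 - a i) ≤ 1 :=
      Finset.prod_le_one (fun i hi => sub_nonneg.2 (h1.2 i hi))
        fun i hi => sub_le_self _ (h0.2 i hi)
    rw [Finset.prod_cons, Finset.sum_cons]
    nlinarith [ih h0.2 h1.2]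

lemma exp_neg_mul_mem_Icc {c t : ℝ} (hc : 0 ≤ c) (ht : 0 ≤ t) : exp (-(c * t)) ∈ Icc 0 1 :=
  ⟨(exp_pos _).le, exp_le_one_iff.2 (neg_nonpos.2 (mul_nonneg hc ht))⟩

lemma one_sub_exp_neg_mul_pos {c t : ℝ} (hc : 0 < c) (ht : 0 < t) : 0 < 1 - exp (-(c * t)) :=
  sub_pos.2 (exp_lt_one_iff.2 (neg_neg_of_pos (mul_pos hc ht)))

lemma integrableOn_exp_neg_mul_Ioi {c : ℝ} (hc : 0 < c) :
    IntegrableOn (fun t => exp (-(c * t))) (Ioi 0) := by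
  simpa only [neg_mul] using exp_neg_integrableOn_Ioi 0 hc

lemma hasDerivAt_one_sub_exp_neg_mul (c t : ℝ) :
    HasDerivAt (fun t => 1 - exp (-(c * t))) (c * exp (-(c * t))) t :=
  ((((hasDerivAt_id t).const_mul c).neg.exp).const_sub 1).congr_deriv (by simp [mul_comm])

lemma integrableOn_exp_neg_mul_mul_one_sub_pow {c : ℝ} (hc : 0 < c) (k : ℕ) :
    IntegrableOn (fun t => exp (-(c * t)) * (1 - exp (-(c * t))) ^ k) (Ioi 0) := by
  refine (integrableOn_exp_neg_mul_Ioi hc).mono' (by fun_prop) ?_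
  filter_upwards [ae_restrict_mem measurableSet_Ioi] with t ht
  obtain ⟨he0, he1⟩ := exp_neg_mul_mem_Icc hc.le (le_of_lt ht)
  rw [norm_of_nonneg (by have := sub_nonneg.2 he1; positivity)]
  exact mul_le_of_le_one_right he0 (pow_le_one₀ (sub_nonneg.2 he1) (sub_le_self _ he0))

lemma integral_exp_neg_mul_mul_one_sub_pow {c : ℝ} (hc : 0 < c) (k : ℕ) :
    ∫ t in Ioi 0, exp (-(c * t)) * (1 - exp (-(c * t))) ^ k = 1 / (c * (k + 1)) := by
  have hderiv : ∀ t ∈ Ici (0 : ℝ),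
      HasDerivAt (fun t => (1 - exp (-(c * t))) ^ (k + 1) / (c * (k + 1)))
        (exp (-(c * t)) * (1 - exp (-(c * t))) ^ k) t := by
    intro t _
    refine (((hasDerivAt_one_sub_exp_neg_mul c t).pow (k + 1)).div_const
      (c * (k + 1))).congr_deriv ?_
    field_simp
    push_cast
    ring
  have hlim : Tendsto (fun t => (1 - exp (-(c * t))) ^ (k + 1) / (c * (k + 1))) atTop
      (nhds (1 / (c * (k + 1)))) := by
    have hexp : Tendsto (fun t => exp (-(c * t))) atTop (nhds 0) :=
      tendsto_exp_atBot.comp (tendsto_neg_atTop_atBot.comp (tendsto_id.const_mul_atTop hc))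
    simpa using ((hexp.const_sub 1).pow (k + 1)).div_const (c * (k + 1))
  simpa using integral_Ioi_of_hasDerivAt_of_tendsto' hderiv
    (integrableOn_exp_neg_mul_mul_one_sub_pow hc k) hlim

lemma integral_one_sub_one_sub_exp_neg_mul_pow {c : ℝ} (hc : 0 < c) (n : ℕ) :
    ∫ t in Ioi 0, (1 - (1 - exp (-(c * t))) ^ n)
      = c⁻¹ * ∑ k ∈ Finset.range n, 1 / ((k : ℝ) + 1) := by
  simp_rw [← mul_neg_geom_sum, sub_sub_cancel, Finset.mul_sum]
  rw [integral_finsetSum _ fun k _ => ?_]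
  · refine Finset.sum_congr rfl fun k _ => ?_
    rw [integral_exp_neg_mul_mul_one_sub_pow hc k]
    field_simp
  exact integrableOn_exp_neg_mul_mul_one_sub_pow hc k

lemma strictConcaveOn_log_one_sub_exp_neg_mul {t : ℝ} (ht : 0 < t) :
    StrictConcaveOn ℝ (Ioi 0) fun c => log (1 - exp (-(c * t))) := by
  have hderiv : ∀ c ∈ Ioi (0 : ℝ),
      deriv (fun c => log (1 - exp (-(c * t)))) c = t / (exp (c * t) - 1) := by
    intro c hc
    have h : HasDerivAt (fun c => log (1 - exp (-(c * t))))
        (t * exp (-(c * t)) / (1 - exp (-(c * t)))) c :=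
      ((((((hasDerivAt_id c).mul_const t).neg.exp).const_sub 1).log
        (one_sub_exp_neg_mul_pos hc ht).ne')).congr_deriv (by simp [mul_comm])
    rw [h.deriv]
    have : exp (c * t) - 1 ≠ 0 := (sub_pos.2 (one_lt_exp_iff.2 (mul_pos hc ht))).ne'
    rw [exp_neg]
    field_simp
  refine StrictAntiOn.strictConcaveOn_of_deriv (convex_Ioi 0)
    (ContinuousOn.log (by fun_prop) fun c hc => (one_sub_exp_neg_mul_pos hc ht).ne') ?_
  rw [interior_Ioi]
  intro a ha b hb hab
  rw [hderiv a ha, hderiv b hb]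
  exact div_lt_div_of_pos_left ht (sub_pos.2 (one_lt_exp_iff.2 (mul_pos ha ht))) (by gcongr)

section

variable {ι : Type*} [Fintype ι] {p : ι → ℝ} {t : ℝ}

lemma missingProb_le_sum (hp : ∀ l, 0 ≤ p l) (ht : 0 ≤ t) :
    missingProb p t ≤ ∑ l, exp (-(p l * t)) :=
  one_sub_prod_one_sub_le_sum _ (fun l _ => (exp_neg_mul_mem_Icc (hp l) ht).1)
    fun l _ => (exp_neg_mul_mem_Icc (hp l) ht).2

lemma missingProb_nonneg (hp : ∀ l, 0 ≤ p l) (ht : 0 ≤ t) : 0 ≤ missingProb p t :=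
  sub_nonneg.2 <| Finset.prod_le_one (fun l _ => sub_nonneg.2 (exp_neg_mul_mem_Icc (hp l) ht).2)
    fun l _ => sub_le_self _ (exp_neg_mul_mem_Icc (hp l) ht).1

lemma exp_neg_mul_le_missingProb (hp : ∀ l, 0 ≤ p l) (ht : 0 ≤ t) (l : ι) :
    exp (-(p l * t)) ≤ missingProb p t := by
  have := Finset.prod_le_prod_of_subset_of_le_one (Finset.subset_univ {l})
    (fun l _ => sub_nonneg.2 (exp_neg_mul_mem_Icc (hp l) ht).2)
    fun l _ _ => sub_le_self _ (exp_neg_mul_mem_Icc (hp l) ht).1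
  rw [Finset.prod_singleton] at this
  unfold missingProb
  linarith

lemma integrableOn_missingProb (hp : ∀ l, 0 < p l) : IntegrableOn (missingProb p) (Ioi 0) := by
  refine (integrable_finsetSum Finset.univ fun l _ => integrableOn_exp_neg_mul_Ioi (hp l)).mono'
    (by unfold missingProb; fun_prop) ?_
  filter_upwards [ae_restrict_mem measurableSet_Ioi] with t ht
  rw [norm_of_nonneg (missingProb_nonneg (fun l => (hp l).le) (le_of_lt ht))]
  simpa using missingProb_le_sum (fun l => (hp l).le) (le_of_lt ht)

lemma inv_le_integral_missingProb (hp : ∀ l, 0 < p l) (l : ι) :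
    (p l)⁻¹ ≤ ∫ t in Ioi 0, missingProb p t := by
  have h := integral_exp_neg_mul_mul_one_sub_pow (hp l) 0
  simp only [pow_zero, mul_one, CharP.cast_eq_zero, zero_add, one_div] at h
  rw [← h]
  exact setIntegral_mono_on (integrableOn_exp_neg_mul_Ioi (hp l)) (integrableOn_missingProb hp)
    measurableSet_Ioi fun t ht => exp_neg_mul_le_missingProb (fun l => (hp l).le) (le_of_lt ht) l

lemma integral_missingProb_const {c : ℝ} (hc : 0 < c) :
    ∫ t in Ioi 0, missingProb (fun _ : ι => c) t
      = c⁻¹ * ∑ k ∈ Finset.range (Fintype.card ι), 1 / ((k : ℝ) + 1) := by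
  simpa [missingProb] using integral_one_sub_one_sub_exp_neg_mul_pow hc (Fintype.card ι)

lemma missingProb_eq_one_sub_exp_sum (hp : ∀ l, 0 < p l) (ht : 0 < t) :
    missingProb p t = 1 - exp (∑ l, log (1 - exp (-(p l * t)))) := by
  rw [exp_sum]
  simp only [exp_log (one_sub_exp_neg_mul_pos (hp _) ht), missingProb]

lemma sum_inv_card_smul_of_sum_eq_one (hsum : ∑ l, p l = 1) :
    ∑ l, (Fintype.card ι : ℝ)⁻¹ • p l = (Fintype.card ι : ℝ)⁻¹ := by
  simp [← Finset.mul_sum, hsum]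

variable [Nonempty ι]

lemma sum_log_one_sub_exp_neg_mul_le (hp : ∀ l, 0 < p l) (hsum : ∑ l, p l = 1) (ht : 0 < t) :
    ∑ l, log (1 - exp (-(p l * t)))
      ≤ ∑ _l : ι, log (1 - exp (-((Fintype.card ι : ℝ)⁻¹ * t))) := by
  have h := (strictConcaveOn_log_one_sub_exp_neg_mul ht).concaveOn.le_map_sum
    (t := Finset.univ) (w := fun _ => (Fintype.card ι : ℝ)⁻¹) (fun _ _ => by positivity)
    (by simp) fun l _ => hp l
  rw [sum_inv_card_smul_of_sum_eq_one hsum, ← Finset.smul_sum, smul_eq_mul,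
    inv_mul_le_iff₀ (by positivity)] at h
  simpa using h

lemma sum_log_one_sub_exp_neg_mul_eq_iff (hp : ∀ l, 0 < p l) (hsum : ∑ l, p l = 1)
    (ht : 0 < t) :
    ∑ l, log (1 - exp (-(p l * t)))
        = ∑ _l : ι, log (1 - exp (-((Fintype.card ι : ℝ)⁻¹ * t)))
      ↔ ∀ l, p l = (Fintype.card ι : ℝ)⁻¹ := by
  have h := (strictConcaveOn_log_one_sub_exp_neg_mul ht).map_sum_eq_iff
    (t := Finset.univ) (w := fun _ => (Fintype.card ι : ℝ)⁻¹) (fun _ _ => by positivity)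
    (by simp) fun l _ => hp l
  rw [sum_inv_card_smul_of_sum_eq_one hsum, ← Finset.smul_sum, smul_eq_mul] at h
  have hn : (0 : ℝ) < Fintype.card ι := by positivity
  simp only [Finset.mem_univ, true_implies] at h
  rw [← h, Finset.sum_const, Finset.card_univ, nsmul_eq_mul, eq_comm,
    eq_inv_mul_iff_mul_eq₀ hn.ne']

lemma missingProb_uniform_le (hp : ∀ l, 0 < p l) (hsum : ∑ l, p l = 1) (ht : 0 < t) :
    missingProb (fun _ : ι => (Fintype.card ι : ℝ)⁻¹) t ≤ missingProb p t := by
  rw [missingProb_eq_one_sub_exp_sum hp ht,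
    missingProb_eq_one_sub_exp_sum (fun _ => by positivity) ht]
  exact sub_le_sub_left (exp_le_exp.2 (sum_log_one_sub_exp_neg_mul_le hp hsum ht)) 1

lemma missingProb_uniform_eq_iff (hp : ∀ l, 0 < p l) (hsum : ∑ l, p l = 1) (ht : 0 < t) :
    missingProb (fun _ : ι => (Fintype.card ι : ℝ)⁻¹) t = missingProb p t
      ↔ ∀ l, p l = (Fintype.card ι : ℝ)⁻¹ := by
  rw [missingProb_eq_one_sub_exp_sum hp ht,
    missingProb_eq_one_sub_exp_sum (fun _ => by positivity) ht, sub_right_inj, exp_eq_exp, eq_comm]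
  exact sum_log_one_sub_exp_neg_mul_eq_iff hp hsum ht

lemma integral_missingProb_uniform_le (hp : ∀ l, 0 < p l) (hsum : ∑ l, p l = 1) :
    ∫ t in Ioi 0, missingProb (fun _ : ι => (Fintype.card ι : ℝ)⁻¹) t
      ≤ ∫ t in Ioi 0, missingProb p t :=
  setIntegral_mono_on (integrableOn_missingProb fun _ => by positivity)
    (integrableOn_missingProb hp) measurableSet_Ioi fun _ ht => missingProb_uniform_le hp hsum ht

lemma integral_missingProb_eq_uniform_iff (hp : ∀ l, 0 < p l) (hsum : ∑ l, p l = 1) :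
    ∫ t in Ioi 0, missingProb p t
        = ∫ t in Ioi 0, missingProb (fun _ : ι => (Fintype.card ι : ℝ)⁻¹) t
      ↔ ∀ l, p l = (Fintype.card ι : ℝ)⁻¹ := by
  refine ⟨fun h => ?_, fun h => by rw [funext h]⟩
  have hae := (integral_eq_iff_of_ae_le (integrableOn_missingProb fun _ => by positivity)
    (integrableOn_missingProb hp) ((ae_restrict_iff' measurableSet_Ioi).2
      (.of_forall fun _ ht => missingProb_uniform_le hp hsum ht))).1 h.symm
  have : (ae (volume.restrict (Ioi (0 : ℝ)))).NeBot := ae_neBot.2 (by simp)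
  obtain ⟨t, heq, ht⟩ := (hae.and (ae_restrict_mem measurableSet_Ioi)).exists
  exact (missingProb_uniform_eq_iff hp hsum ht).1 heq

end

/-- Weighted coupon collector: with coupon probabilities `p₁, …, p_L` summing to `1`,
the expected collection time `T₀ = ∫₀^∞ (1 - ∏ₗ (1 - e^{-pₗ t})) dt` satisfies
`T₀ ≥ max (1 / minₗ pₗ) (L ∑_{l=1}^L 1/l)`, and the second bound is attained with
equality iff all `pₗ = 1/L`. -/
theorem stmt12 (L : ℕ) [NeZero L] (p : Fin L → ℝ) (hp : ∀ l, 0 < p l)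
    (hsum : ∑ l, p l = 1) :
    (∫ t in Set.Ioi (0 : ℝ), (1 - ∏ l, (1 - Real.exp (-(p l * t)))))
        ≥ max (1 / Finset.univ.inf' Finset.univ_nonempty p)
            ((L : ℝ) * ∑ l ∈ Finset.range L, 1 / ((l : ℝ) + 1)) ∧
    ((∫ t in Set.Ioi (0 : ℝ), (1 - ∏ l, (1 - Real.exp (-(p l * t)))))
        = (L : ℝ) * ∑ l ∈ Finset.range L, 1 / ((l : ℝ) + 1)
      ↔ ∀ l, p l = 1 / L) := by
  change (∫ t in Ioi 0, missingProb p t) ≥ _ ∧ ((∫ t in Ioi 0, missingProb p t) = _ ↔ _)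
  have huniform : ∫ t in Ioi 0, missingProb (fun _ : Fin L => (Fintype.card (Fin L) : ℝ)⁻¹) t
      = L * ∑ k ∈ Finset.range L, 1 / ((k : ℝ) + 1) := by
    simpa using integral_missingProb_const (ι := Fin L) (c := (L : ℝ)⁻¹)
      (inv_pos.2 (Nat.cast_pos.2 (NeZero.pos L)))
  obtain ⟨l₀, -, hl₀⟩ := Finset.exists_mem_eq_inf' Finset.univ_nonempty p
  refine ⟨max_le ?_ ?_, ?_⟩
  · rw [hl₀, one_div]
    exact inv_le_integral_missingProb hp l₀
  · rw [← huniform]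
    exact integral_missingProb_uniform_le hp hsum
  · rw [← huniform, integral_missingProb_eq_uniform_iff hp hsum]
    simp
end

section
/- Let σ be C¹ on [0,∞) with σ'(x) > 0 for x > 0, and let φ(x) = σ'(x)/x be nondecreasing on (0, √2]. Fix probabilities p₁ > p₂ ≥ ... ≥ p_n > 0 (with strict maximum p₁). Then the unique maximizer of F(s) = Σ_g p_g σ(s_g) over {s ∈ ℝⁿ : s_g ≥ 0, Σ_g s_g² ≤ 2} is s₁ = √2, s_g = 0 for g ≥ 2. -/
/-!
The substitution `u = s²` turns the objective into `∑ p_g G(u_g)` with `G(u) = σ(√u)`, and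
`G'(u) = φ(√u) / 2` is nondecreasing, so `G` is convex on `[0, 2]` and lies below its chord:
`σ(x) ≤ σ(0) + x² (σ(√2) - σ(0)) / 2`. Summing, `F(s)` is bounded by an increasing affine function
of `∑ p_g s_g²`, which is at most `2 p₁`, with equality only when all of `∑ s_g² = 2` sits on the
strictly largest weight `p₁`.
-/

open Finset Real Set

theorem ConvexOn.le_secant_Icc_zero {f : ℝ → ℝ} {a u : ℝ} (hf : ConvexOn ℝ (Icc 0 a) f)
    (hu : u ∈ Icc 0 a) : f u ≤ f 0 + u * ((f a - f 0) / a) := by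
  rcases hu.1.eq_or_lt with rfl | hu0
  · simp
  have ha : 0 < a := hu0.trans_le hu.2
  have hslope := hf.secant_mono (left_mem_Icc.2 ha.le) hu (right_mem_Icc.2 ha.le) hu0.ne'
    ha.ne' hu.2
  rw [sub_zero, sub_zero, div_le_iff₀ hu0] at hslope
  linarith

theorem convexOn_comp_sqrt {σ σ' : ℝ → ℝ} {a : ℝ} (hσ : ContinuousOn σ (Ici 0))
    (hder : ∀ x, 0 < x → HasDerivAt σ (σ' x) x)
    (hφ : MonotoneOn (fun x => σ' x / x) (Ioc 0 √a)) :
    ConvexOn ℝ (Icc 0 a) (σ ∘ sqrt) := by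
  have hG' : ∀ u ∈ Ioo 0 a, HasDerivAt (σ ∘ sqrt) (σ' √u / √u / 2) u := by
    intro u hu
    exact ((hder _ (sqrt_pos.2 hu.1)).comp u (hasDerivAt_sqrt hu.1.ne')).congr_deriv (by ring)
  refine MonotoneOn.convexOn_of_deriv (convex_Icc 0 a)
    (hσ.comp continuous_sqrt.continuousOn fun u _ => sqrt_nonneg u) ?_ ?_ <;>
    rw [interior_Icc]
  · exact fun u hu => (hG' u hu).differentiableAt.differentiableWithinAt
  · intro u hu v hv huv
    rw [(hG' u hu).deriv, (hG' v hv).deriv]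
    have hφuv := hφ ⟨sqrt_pos.2 hu.1, sqrt_le_sqrt hu.2.le⟩ ⟨sqrt_pos.2 hv.1, sqrt_le_sqrt hv.2.le⟩
      (sqrt_le_sqrt huv)
    dsimp only at hφuv
    linarith

theorem le_add_sq_mul_of_convexOn_comp_sqrt {σ : ℝ → ℝ} {a x : ℝ}
    (hG : ConvexOn ℝ (Icc 0 a) (σ ∘ sqrt)) (hx : 0 ≤ x) (hxa : x ^ 2 ≤ a) :
    σ x ≤ σ 0 + x ^ 2 * ((σ √a - σ 0) / a) := by
  simpa [sqrt_sq hx] using hG.le_secant_Icc_zero ⟨sq_nonneg x, hxa⟩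

section WeightedSums

variable {ι : Type*} [Fintype ι] {p s : ι → ℝ} {a : ℝ}

theorem sum_mul_le_of_convexOn_comp_sqrt {σ : ℝ → ℝ} (hG : ConvexOn ℝ (Icc 0 a) (σ ∘ sqrt))
    (hp : ∀ g, 0 ≤ p g) (hs : ∀ g, 0 ≤ s g) (hsum : ∑ g, s g ^ 2 ≤ a) :
    ∑ g, p g * σ (s g) ≤ ∑ g, p g * σ 0 + (σ √a - σ 0) / a * ∑ g, p g * s g ^ 2 := by
  rw [mul_sum, ← sum_add_distrib]
  gcongr with g
  have hsg : s g ^ 2 ≤ a :=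
    (single_le_sum (fun g _ => sq_nonneg (s g)) (mem_univ g)).trans hsum
  calc p g * σ (s g) ≤ p g * (σ 0 + s g ^ 2 * ((σ √a - σ 0) / a)) :=
        mul_le_mul_of_nonneg_left (le_add_sq_mul_of_convexOn_comp_sqrt hG (hs g) hsg) (hp g)
    _ = p g * σ 0 + (σ √a - σ 0) / a * (p g * s g ^ 2) := by ring

theorem sum_mul_sq_le_of_le {i : ι} (hp : ∀ g, p g ≤ p i) (hpi : 0 ≤ p i)
    (hsum : ∑ g, s g ^ 2 ≤ a) : ∑ g, p g * s g ^ 2 ≤ p i * a :=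
  calc ∑ g, p g * s g ^ 2 ≤ ∑ g, p i * s g ^ 2 := by
        gcongr with g
        exact hp g
    _ = p i * ∑ g, s g ^ 2 := (mul_sum ..).symm
    _ ≤ p i * a := by gcongr

theorem eq_ite_of_sum_mul_sq_eq [DecidableEq ι] {i : ι} (hp : ∀ g, g ≠ i → p g < p i)
    (hpi : 0 < p i) (hs : ∀ g, 0 ≤ s g) (hsum : ∑ g, s g ^ 2 ≤ a)
    (heq : ∑ g, p g * s g ^ 2 = p i * a) : s = fun g => if g = i then √a else 0 := by
  have hgap : ∀ g, 0 ≤ (p i - p g) * s g ^ 2 := fun g => by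
    rcases eq_or_ne g i with rfl | hg
    · simp
    · exact mul_nonneg (sub_pos.2 (hp g hg)).le (sq_nonneg _)
  have hgap_sum : ∑ g, (p i - p g) * s g ^ 2 = p i * (∑ g, s g ^ 2 - a) := by
    simp only [sub_mul, sum_sub_distrib, ← mul_sum, heq]
    ring
  have hgap_zero : ∀ g, (p i - p g) * s g ^ 2 = 0 := by
    refine funext_iff.1 <|
      (Fintype.sum_eq_zero_iff_of_nonneg hgap).1 (le_antisymm ?_ (sum_nonneg fun g _ => hgap g))
    rw [hgap_sum]
    exact mul_nonpos_of_nonneg_of_nonpos hpi.le (by linarith)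
  have hzero : ∀ g, g ≠ i → s g = 0 := fun g hg => by
    simpa [(sub_pos.2 (hp g hg)).ne'] using hgap_zero g
  have hsi : s i ^ 2 = a := by
    rw [sum_eq_single i (fun g _ hg => by simp [hzero g hg]) (by simp)] at heq
    exact mul_left_cancel₀ hpi.ne' heq
  funext g
  split_ifs with hg
  · rw [hg, ← hsi, sqrt_sq (hs i)]
  · exact hzero g hg

theorem sum_mul_comp_ite [DecidableEq ι] (f : ℝ → ℝ) (i : ι) (x y : ℝ) :
    ∑ g, p g * f (if g = i then x else y) = ∑ g, p g * f y + p i * (f x - f y) :=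
  calc ∑ g, p g * f (if g = i then x else y)
        = ∑ g, (p g * f y + if g = i then p g * (f x - f y) else 0) :=
          sum_congr rfl fun g _ => by split_ifs <;> ring
    _ = ∑ g, p g * f y + p i * (f x - f y) := by rw [sum_add_distrib, sum_ite_eq']; simp

end WeightedSums

theorem stmt14_general (n : ℕ) [NeZero n] (σ σ' : ℝ → ℝ)
    (hder : ∀ x ∈ Set.Ici (0 : ℝ), HasDerivWithinAt σ (σ' x) (Set.Ici 0) x)
    (hpos : ∀ x : ℝ, 0 < x → 0 < σ' x)
    (hφ : ∀ x y : ℝ, 0 < x → x ≤ y → y ≤ Real.sqrt 2 → σ' x / x ≤ σ' y / y)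
    (p : Fin n → ℝ) (hp : ∀ g, 0 < p g)
    (hmax : ∀ g : Fin n, g ≠ 0 → p g < p 0) :
    (∀ s : Fin n → ℝ, (∀ g, 0 ≤ s g) → (∑ g, (s g) ^ 2) ≤ 2 →
      ∑ g, p g * σ (s g)
        ≤ ∑ g, p g * σ (if g = 0 then Real.sqrt 2 else 0)) ∧
    (∀ s : Fin n → ℝ, (∀ g, 0 ≤ s g) → (∑ g, (s g) ^ 2) ≤ 2 →
      ∑ g, p g * σ (s g) = ∑ g, p g * σ (if g = 0 then Real.sqrt 2 else 0) →
      s = fun g => if g = 0 then Real.sqrt 2 else 0) := by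
  have hσ : ContinuousOn σ (Ici 0) := fun x hx => (hder x hx).continuousWithinAt
  have hderAt : ∀ x, 0 < x → HasDerivAt σ (σ' x) x := fun x hx =>
    (hder x hx.le).hasDerivAt (Ici_mem_nhds hx)
  have hG := convexOn_comp_sqrt hσ hderAt fun x hx y hy hxy => hφ x y hx.1 hxy hy.2
  have hσ_mono : StrictMonoOn σ (Ici 0) :=
    strictMonoOn_of_hasDerivWithinAt_pos (convex_Ici 0) hσ
      (fun x hx => (hderAt x (by simpa using hx)).hasDerivWithinAt)
      (fun x hx => hpos x (by simpa using hx))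
  have hslope : 0 < (σ √2 - σ 0) / 2 :=
    div_pos (sub_pos.2 (hσ_mono self_mem_Ici (sqrt_nonneg 2) (by positivity))) two_pos
  have hle : ∀ g, p g ≤ p 0 := fun g => by
    rcases eq_or_ne g 0 with rfl | hg
    exacts [le_rfl, (hmax g hg).le]
  have hbound : ∀ s : Fin n → ℝ, (∀ g, 0 ≤ s g) → ∑ g, s g ^ 2 ≤ 2 →
      ∑ g, p g * σ (s g) ≤ ∑ g, p g * σ 0 + (σ √2 - σ 0) / 2 * ∑ g, p g * s g ^ 2 :=
    fun s hs hsum => sum_mul_le_of_convexOn_comp_sqrt hG (fun g => (hp g).le) hs hsum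
  rw [sum_mul_comp_ite σ 0 √2 0]
  refine ⟨fun s hs hsum => ?_, fun s hs hsum heq => ?_⟩
  · calc ∑ g, p g * σ (s g)
        ≤ ∑ g, p g * σ 0 + (σ √2 - σ 0) / 2 * ∑ g, p g * s g ^ 2 := hbound s hs hsum
      _ ≤ ∑ g, p g * σ 0 + (σ √2 - σ 0) / 2 * (p 0 * 2) := by
        gcongr
        exact sum_mul_sq_le_of_le hle (hp 0).le hsum
      _ = ∑ g, p g * σ 0 + p 0 * (σ √2 - σ 0) := by ring
  · refine eq_ite_of_sum_mul_sq_eq hmax (hp 0) hs hsum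
      (le_antisymm (sum_mul_sq_le_of_le hle (hp 0).le hsum) ?_)
    have hF := hbound s hs hsum
    rw [heq] at hF
    exact le_of_mul_le_mul_left (by linarith) hslope

/-- Peaked (memorization) optimum: if `σ` is `C¹` on `[0, ∞)` with `σ' > 0` on `(0, ∞)`
and `φ(x) = σ'(x)/x` nondecreasing on `(0, √2]`, and `p₁ > p₂ ≥ … ≥ pₙ > 0`, then the
unique maximizer of `F(s) = ∑_g p_g σ(s_g)` over `{s : s_g ≥ 0, ∑ s_g² ≤ 2}` is
`s₁ = √2`, `s_g = 0` for `g ≥ 2`. -/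
theorem stmt14 (n : ℕ) [NeZero n] (σ σ' : ℝ → ℝ)
    (hder : ∀ x ∈ Set.Ici (0 : ℝ), HasDerivWithinAt σ (σ' x) (Set.Ici 0) x)
    (hcont : ContinuousOn σ' (Set.Ici 0))
    (hpos : ∀ x : ℝ, 0 < x → 0 < σ' x)
    (hφ : ∀ x y : ℝ, 0 < x → x ≤ y → y ≤ Real.sqrt 2 → σ' x / x ≤ σ' y / y)
    (p : Fin n → ℝ) (hp : ∀ g, 0 < p g)
    (hmono : ∀ i j : Fin n, i ≤ j → p j ≤ p i)
    (hmax : ∀ g : Fin n, g ≠ 0 → p g < p 0) :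
    (∀ s : Fin n → ℝ, (∀ g, 0 ≤ s g) → (∑ g, (s g) ^ 2) ≤ 2 →
      ∑ g, p g * σ (s g)
        ≤ ∑ g, p g * σ (if g = 0 then Real.sqrt 2 else 0)) ∧
    (∀ s : Fin n → ℝ, (∀ g, 0 ≤ s g) → (∑ g, (s g) ^ 2) ≤ 2 →
      ∑ g, p g * σ (s g) = ∑ g, p g * σ (if g = 0 then Real.sqrt 2 else 0) →
      s = fun g => if g = 0 then Real.sqrt 2 else 0) :=
  stmt14_general n σ σ' hder hpos hφ p hp hmax
end

section
/- Let σ be C¹ with σ'(x) > 0 and φ(x) = σ'(x)/x strictly decreasing on (0, ∞) with φ(0⁺) = ∞. Then the maximizer of F(s) = Σ_g p_g σ(s_g) subject to s_g ≥ 0 and Σ_g s_g² = 2 has all coordinates strictly positive, given by s_g = φ⁻¹(2λ/p_g) for the unique λ > 0 satisfying Σ_g φ⁻¹(2λ/p_g)² = 2; moreover p_i > p_j implies s_i > s_j > 0. -/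
/-!
Write `φ x = σ' x / x`. As `φ` is decreasing, `x ↦ σ x - φ(a) x² / 2` is maximal on `[0, ∞)` at
`x = a`: in the variable `u = x²`, `σ(√u)` is concave with slope `φ(√u) / 2`. A maximizer `s` on the
nonnegative part of the sphere exists by compactness. Moving squared mass `t` from a coordinate `j`
to a coordinate `i` and comparing with these tangent lines gives
`pᵢ φ(√(sᵢ² + t)) ≤ pⱼ φ(√(sⱼ² - t))`. If `sᵢ = 0` the left side tends to `∞` as `t → 0⁺`, so every
coordinate is positive; letting `t → 0⁺` then yields the Lagrange condition `pᵢ φ(sᵢ) = 2λ`.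
Since `φ` is strictly decreasing, a larger weight or a smaller `λ` forces larger coordinates, which
gives the ordering and, together with `∑ sᵢ² = 2`, the uniqueness of `λ` and `s`.
-/

open Set Filter Topology Function

section Sphere

variable {ι : Type*} [Fintype ι]

-- `c` is the squared radius.
def nonnegSphere (ι : Type*) [Fintype ι] (c : ℝ) : Set (ι → ℝ) :=
  {s | (∀ i, 0 ≤ s i) ∧ ∑ i, s i ^ 2 = c}

theorem isCompact_nonnegSphere (c : ℝ) : IsCompact (nonnegSphere ι c) := by
  refine Metric.isCompact_of_isClosed_isBounded ?_ ?_
  · have hnonneg : IsClosed {s : ι → ℝ | ∀ i, 0 ≤ s i} := by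
      simp only [ofPred_forall]
      exact isClosed_iInter fun i => isClosed_le continuous_const (continuous_apply i)
    exact hnonneg.inter (isClosed_eq (by fun_prop) continuous_const)
  · refine (Metric.isBounded_closedBall (x := 0) (r := √c)).subset fun s hs => ?_
    rw [mem_closedBall_zero_iff, pi_norm_le_iff_of_nonneg (Real.sqrt_nonneg c)]
    intro i
    rw [Real.norm_eq_abs]
    exact Real.abs_le_sqrt (hs.2 ▸ Finset.single_le_sum (fun j _ => sq_nonneg (s j))
      (Finset.mem_univ i))

theorem nonnegSphere_nonempty [Nonempty ι] {c : ℝ} (hc : 0 ≤ c) :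
    (nonnegSphere ι c).Nonempty :=
  ⟨fun _ => √(c / Fintype.card ι), fun _ => Real.sqrt_nonneg _, by
    rw [Finset.sum_const, Real.sq_sqrt (by positivity), nsmul_eq_mul, Finset.card_univ,
      mul_div_cancel₀ _ (by positivity)]⟩

theorem sum_apply_update [DecidableEq ι] (F : ι → ℝ → ℝ) (s : ι → ℝ) (k : ι) (v : ℝ) :
    ∑ i, F i (update s k v i) = ∑ i, F i (s i) + (F k v - F k (s k)) := by
  simp only [apply_update F s k v, Finset.sum_update_of_mem (Finset.mem_univ k),
    Finset.sum_eq_add_sum_sdiff_singleton_of_mem (Finset.mem_univ k) (fun i => F i (s i))]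
  ring

end Sphere

theorem le_add_ratio_mul_sq_sub_sq {σ σ' : ℝ → ℝ} (hder : ∀ x, HasDerivAt σ (σ' x) x)
    (hφ : AntitoneOn (fun x => σ' x / x) (Ioi 0)) {a b : ℝ} (ha : 0 < a) (hb : 0 ≤ b) :
    σ b ≤ σ a + σ' a / a / 2 * (b ^ 2 - a ^ 2) := by
  set c := σ' a / a
  set g : ℝ → ℝ := fun x => σ x - c / 2 * x ^ 2
  have hg : ∀ x, HasDerivAt g (σ' x - c * x) x := fun x =>
    ((hder x).sub ((hasDerivAt_pow 2 x).const_mul (c / 2))).congr_deriv (by norm_num; ring)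
  have hgc : Continuous g := continuous_iff_continuousAt.2 fun x => (hg x).continuousAt
  have hgd : Differentiable ℝ g := fun x => (hg x).differentiableAt
  have hg' : ∀ x, 0 < x → deriv g x = x * (σ' x / x - c) := fun x hx => by
    rw [(hg x).deriv]
    field_simp
  have hgab : g b ≤ g a := by
    rcases le_total b a with hba | hab
    · refine monotoneOn_of_deriv_nonneg (convex_Icc 0 a) hgc.continuousOn hgd.differentiableOn
        (fun x hx => ?_) ⟨hb, hba⟩ ⟨ha.le, le_rfl⟩ hba
      rw [interior_Icc] at hx
      rw [hg' x hx.1]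
      exact mul_nonneg hx.1.le (sub_nonneg.2 (hφ hx.1 ha hx.2.le))
    · refine antitoneOn_of_deriv_nonpos (convex_Ici a) hgc.continuousOn hgd.differentiableOn
        (fun x hx => ?_) self_mem_Ici hab hab
      rw [interior_Ici] at hx
      have hx0 : 0 < x := ha.trans hx
      rw [hg' x hx0]
      exact mul_nonpos_of_nonneg_of_nonpos hx0.le (sub_nonpos.2 (hφ ha hx0 hx.le))
  simp only [g] at hgab
  linarith

section Maximizer

variable {ι : Type*} [Fintype ι] {σ σ' : ℝ → ℝ} {p : ι → ℝ} {c : ℝ} {s : ι → ℝ}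

theorem mul_ratio_le_of_isMaxOn (hder : ∀ x, HasDerivAt σ (σ' x) x)
    (hφ : AntitoneOn (fun x => σ' x / x) (Ioi 0)) (hp : ∀ i, 0 ≤ p i)
    (hs : s ∈ nonnegSphere ι c)
    (hmax : IsMaxOn (fun s => ∑ i, p i * σ (s i)) (nonnegSphere ι c) s)
    {i j : ι} (hij : i ≠ j) {a b : ℝ} (ha : 0 < a) (hb : 0 < b)
    (hab : a ^ 2 + b ^ 2 = s i ^ 2 + s j ^ 2) (hia : s i < a) :
    p i * (σ' a / a) ≤ p j * (σ' b / b) := by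
  classical
  have hupdate (F : ι → ℝ → ℝ) : ∑ k, F k (update (update s i a) j b k) =
      ∑ k, F k (s k) + (F i a - F i (s i)) + (F j b - F j (s j)) := by
    rw [sum_apply_update, sum_apply_update, update_of_ne hij.symm]
  have hmem : update (update s i a) j b ∈ nonnegSphere ι c := by
    refine ⟨fun k => ?_, ?_⟩
    · rcases eq_or_ne k j with rfl | hkj
      · simpa using hb.le
      rw [update_of_ne hkj]
      rcases eq_or_ne k i with rfl | hki
      · simpa using ha.le
      rw [update_of_ne hki]
      exact hs.1 k
    · rw [hupdate fun _ x => x ^ 2, hs.2]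
      linarith
  have hle : ∑ k, p k * σ (update (update s i a) j b k) ≤ ∑ k, p k * σ (s k) := hmax hmem
  rw [hupdate fun k x => p k * σ x] at hle
  set t := a ^ 2 - s i ^ 2
  have ht : 0 < t := sub_pos.2 (pow_lt_pow_left₀ hia (hs.1 i) two_ne_zero)
  have hi := mul_le_mul_of_nonneg_left (le_add_ratio_mul_sq_sub_sq hder hφ ha (hs.1 i)) (hp i)
  have hj := mul_le_mul_of_nonneg_left (le_add_ratio_mul_sq_sub_sq hder hφ hb (hs.1 j)) (hp j)
  have hsj : s j ^ 2 - b ^ 2 = t := by linarith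
  rw [show s i ^ 2 - a ^ 2 = -t by ring] at hi
  rw [hsj] at hj
  refine le_of_mul_le_mul_right ?_ ht
  linarith

theorem pos_of_isMaxOn (hder : ∀ x, HasDerivAt σ (σ' x) x)
    (hφ : AntitoneOn (fun x => σ' x / x) (Ioi 0))
    (hφtop : Tendsto (fun x => σ' x / x) (𝓝[>] 0) atTop) (hp : ∀ i, 0 < p i) (hc : 0 < c)
    (hs : s ∈ nonnegSphere ι c)
    (hmax : IsMaxOn (fun s => ∑ i, p i * σ (s i)) (nonnegSphere ι c) s) (i : ι) : 0 < s i := by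
  by_contra hi_pos
  have hi : s i = 0 := le_antisymm (not_lt.1 hi_pos) (hs.1 i)
  obtain ⟨j, hj⟩ : ∃ j, 0 < s j := by
    by_contra! h
    have : ∑ k, s k ^ 2 = 0 := by simp [fun k => le_antisymm (h k) (hs.1 k)]
    linarith [hs.2]
  have hij : i ≠ j := by rintro rfl; linarith
  set m := s j ^ 2 / 2 with hm_def
  have hm : 0 < m := by positivity
  have hsqrt : Tendsto Real.sqrt (𝓝[>] 0) (𝓝[>] 0) :=
    tendsto_nhdsWithin_of_tendsto_nhds_of_eventually_within _
      (Real.continuous_sqrt.tendsto' 0 0 Real.sqrt_zero |>.mono_left nhdsWithin_le_nhds)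
      (eventually_nhdsWithin_of_forall fun t ht => Real.sqrt_pos.2 ht)
  obtain ⟨t, hbig, ht, htm⟩ :=
    ((((hφtop.comp hsqrt).const_mul_atTop (hp i)).eventually_gt_atTop
      (p j * (σ' √m / √m))).and (Ioo_mem_nhdsGT hm)).exists
  have hb : √m ≤ √(s j ^ 2 - t) := Real.sqrt_le_sqrt (by linarith)
  have hle := mul_ratio_le_of_isMaxOn hder hφ (fun k => (hp k).le) hs hmax hij
    (Real.sqrt_pos.2 ht) ((Real.sqrt_pos.2 hm).trans_le hb) (by
      rw [Real.sq_sqrt ht.le, Real.sq_sqrt (by linarith), hi]; ring) (by simpa [hi] using ht)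
  have hmono := mul_le_mul_of_nonneg_left
    (hφ (Real.sqrt_pos.2 hm) ((Real.sqrt_pos.2 hm).trans_le hb) hb) (hp j).le
  simp only [comp_apply] at hbig
  linarith

theorem mul_ratio_le_of_isMaxOn_of_pos (hder : ∀ x, HasDerivAt σ (σ' x) x)
    (hcont : Continuous σ') (hφ : AntitoneOn (fun x => σ' x / x) (Ioi 0)) (hp : ∀ i, 0 ≤ p i)
    (hs : s ∈ nonnegSphere ι c)
    (hmax : IsMaxOn (fun s => ∑ i, p i * σ (s i)) (nonnegSphere ι c) s)
    {i j : ι} (hij : i ≠ j) (hi : 0 < s i) (hj : 0 < s j) :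
    p i * (σ' (s i) / s i) ≤ p j * (σ' (s j) / s j) := by
  have hA : Tendsto (fun t => √(s i ^ 2 + t)) (𝓝 0) (𝓝 (s i)) := by
    have h := (continuous_const_add (s i ^ 2)).sqrt.tendsto 0
    rwa [add_zero, Real.sqrt_sq hi.le] at h
  have hB : Tendsto (fun t => √(s j ^ 2 - t)) (𝓝 0) (𝓝 (s j)) := by
    have h := (continuous_sub_left (s j ^ 2)).sqrt.tendsto 0
    rwa [sub_zero, Real.sqrt_sq hj.le] at h
  refine le_of_tendsto_of_tendsto (b := 𝓝[>] 0)
    ((((hcont.tendsto _).comp hA).div hA hi.ne').const_mul (p i) |>.mono_left nhdsWithin_le_nhds)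
    ((((hcont.tendsto _).comp hB).div hB hj.ne').const_mul (p j) |>.mono_left nhdsWithin_le_nhds)
    ?_
  filter_upwards [Ioo_mem_nhdsGT (pow_pos hj 2)] with t ⟨ht, htj⟩
  have hsq : √(s i ^ 2 + t) ^ 2 + √(s j ^ 2 - t) ^ 2 = s i ^ 2 + s j ^ 2 := by
    rw [Real.sq_sqrt (by positivity), Real.sq_sqrt (by linarith)]
    ring
  exact mul_ratio_le_of_isMaxOn hder hφ hp hs hmax hij (by positivity)
    (Real.sqrt_pos.2 (by linarith)) hsq ((Real.lt_sqrt (hs.1 i)).2 (by linarith))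

end Maximizer

section Profile

variable {ι : Type*} {φ : ℝ → ℝ} {p : ι → ℝ} {lam μ : ℝ} {s u : ι → ℝ}

-- The Lagrange condition `pᵢ φ(sᵢ) = 2λ` for `∑ pᵢ σ(sᵢ)` on a sphere, with `φ x = σ' x / x`.
def IsProfile (φ : ℝ → ℝ) (p : ι → ℝ) (lam : ℝ) (s : ι → ℝ) : Prop :=
  ∀ i, 0 < s i ∧ φ (s i) = 2 * lam / p i

theorem IsProfile.lt_of_weight_lt (hφ : StrictAntiOn φ (Ioi 0)) (hp : ∀ i, 0 < p i)
    (hlam : 0 < lam) (hs : IsProfile φ p lam s) {i j : ι} (hij : p j < p i) : s j < s i :=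
  (hφ.lt_iff_gt (hs i).1 (hs j).1).1 <| by
    rw [(hs i).2, (hs j).2]
    exact div_lt_div_of_pos_left (by positivity) (hp j) hij

theorem IsProfile.lt_of_lt (hφ : StrictAntiOn φ (Ioi 0)) (hp : ∀ i, 0 < p i)
    (hs : IsProfile φ p lam s) (hu : IsProfile φ p μ u) (hlt : lam < μ) (i : ι) : u i < s i :=
  (hφ.lt_iff_gt (hs i).1 (hu i).1).1 <| by
    rw [(hs i).2, (hu i).2]
    exact div_lt_div_of_pos_right (by linarith) (hp i)

theorem IsProfile.eq_of_sum_sq_eq [Fintype ι] [Nonempty ι] (hφ : StrictAntiOn φ (Ioi 0))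
    (hp : ∀ i, 0 < p i) (hs : IsProfile φ p lam s) (hu : IsProfile φ p μ u)
    (hsum : ∑ i, s i ^ 2 = ∑ i, u i ^ 2) : lam = μ ∧ s = u := by
  have hsum_lt {lam μ : ℝ} {s u : ι → ℝ} (hs : IsProfile φ p lam s) (hu : IsProfile φ p μ u)
      (hlt : lam < μ) : ∑ i, u i ^ 2 < ∑ i, s i ^ 2 :=
    Finset.sum_lt_sum_of_nonempty Finset.univ_nonempty fun i _ =>
      pow_lt_pow_left₀ (hs.lt_of_lt hφ hp hu hlt i) (hu i).1.le two_ne_zero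
  have hlam : lam = μ := by
    rcases lt_trichotomy lam μ with hlt | heq | hgt
    · exact absurd hsum (hsum_lt hs hu hlt).ne'
    · exact heq
    · exact absurd hsum (hsum_lt hu hs hgt).ne
  refine ⟨hlam, funext fun i => hφ.injOn (hs i).1 (hu i).1 ?_⟩
  rw [(hs i).2, (hu i).2, hlam]

end Profile

/-- Spreading optimum: if `σ` is `C¹` with `σ' > 0` on `(0, ∞)`, `φ(x) = σ'(x)/x`
strictly decreasing on `(0, ∞)` with `φ(0⁺) = ∞`, then the maximizer of
`F(s) = ∑_g p_g σ(s_g)` subject to `s_g ≥ 0`, `∑ s_g² = 2` has all coordinates strictly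
positive, given by `φ(s_g) = 2λ/p_g` for the unique `λ > 0` making `∑ s_g² = 2`;
moreover `p_i > p_j` implies `s_i > s_j > 0`. -/
theorem stmt15 (n : ℕ) [NeZero n] (σ σ' : ℝ → ℝ)
    (hder : ∀ x : ℝ, HasDerivAt σ (σ' x) x) (hcont : Continuous σ')
    (hpos : ∀ x : ℝ, 0 < x → 0 < σ' x)
    (hφdec : StrictAntiOn (fun x => σ' x / x) (Set.Ioi 0))
    (hφtop : Filter.Tendsto (fun x => σ' x / x) (nhdsWithin 0 (Set.Ioi 0)) Filter.atTop)
    (p : Fin n → ℝ) (hp : ∀ g, 0 < p g) :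
    ∃ lam : ℝ, 0 < lam ∧ ∃ s : Fin n → ℝ,
      (∀ g, 0 < s g ∧ σ' (s g) / (s g) = 2 * lam / p g) ∧
      (∑ g, (s g) ^ 2 = 2) ∧
      (∀ s' : Fin n → ℝ, (∀ g, 0 ≤ s' g) → (∑ g, (s' g) ^ 2 = 2) →
        ∑ g, p g * σ (s' g) ≤ ∑ g, p g * σ (s g)) ∧
      (∀ i j : Fin n, p j < p i → s j < s i) ∧
      (∀ lam' : ℝ, ∀ s'' : Fin n → ℝ, 0 < lam' →
        (∀ g, 0 < s'' g ∧ σ' (s'' g) / (s'' g) = 2 * lam' / p g) →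
        (∑ g, (s'' g) ^ 2 = 2) → lam' = lam ∧ s'' = s) := by
  have hσ : Continuous σ := continuous_iff_continuousAt.2 fun x => (hder x).continuousAt
  obtain ⟨s, hs, hmax⟩ := (isCompact_nonnegSphere 2).exists_isMaxOn
    (nonnegSphere_nonempty zero_le_two) (by fun_prop : Continuous fun s : Fin n → ℝ =>
      ∑ g, p g * σ (s g)).continuousOn
  have hspos : ∀ g, 0 < s g := pos_of_isMaxOn hder hφdec.antitoneOn hφtop hp two_pos hs hmax
  have hratio_le {i j : Fin n} (hij : i ≠ j) := mul_ratio_le_of_isMaxOn_of_pos hder hcont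
    hφdec.antitoneOn (fun g => (hp g).le) hs hmax hij (hspos i) (hspos j)
  set lam := p 0 * (σ' (s 0) / s 0) / 2
  have hprofile : IsProfile (fun x => σ' x / x) p lam s := fun g => by
    refine ⟨hspos g, (eq_div_iff (hp g).ne').2 ?_⟩
    rcases eq_or_ne g 0 with rfl | hg
    · ring
    · rw [mul_comm, le_antisymm (hratio_le hg) (hratio_le hg.symm)]
      ring
  have hlam : 0 < lam := by
    have := div_pos (hpos _ (hspos 0)) (hspos 0)
    have := hp 0
    positivity
  refine ⟨lam, hlam, s, hprofile, hs.2, fun s' h1 h2 => hmax ⟨h1, h2⟩,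
    fun i j hij => hprofile.lt_of_weight_lt hφdec hp hlam hij,
    fun lam' s'' _ hs'' hsum =>
      IsProfile.eq_of_sum_sq_eq hφdec hp hs'' hprofile (hsum.trans hs.2.symm)⟩
end

section
/- Let F̃ = [f̃₁, f̃₂, F̃_r] ∈ ℝ^{n×K} with η > 0, G = F̃ᵀF̃ + ηI, and P = I − F̃_r(F̃_rᵀF̃_r + ηI)⁻¹F̃_rᵀ. Then the (1,2) entry of G⁻¹ equals −(f̃₁ᵀPf̃₂) / [(η + f̃₁ᵀPf̃₁)(η + f̃₂ᵀPf̃₂) − (f̃₁ᵀPf̃₂)²], and in particular has sign opposite to f̃₁ᵀPf̃₂. -/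
open Matrix
open scoped ComplexOrder

/-!
Split `G = F̃ᵀF̃ + ηI` into blocks along `F̃ = [C, F̃ᵣ]` with `C = [f̃₁, f̃₂]`. Since the block
`F̃ᵣᵀF̃ᵣ + ηI` is invertible, the top-left `2 × 2` block of `G⁻¹` is the inverse of the Schur
complement `S = CᵀC + ηI - CᵀF̃ᵣ(F̃ᵣᵀF̃ᵣ + ηI)⁻¹F̃ᵣᵀC = CᵀPC + ηI`. As a Schur complement of the
positive definite `G`, `S` is positive definite, so `det S > 0`, and the adjugate formula for
`2 × 2` inverses gives `(S⁻¹)₁₂ = -S₁₂ / det S`.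
-/

namespace Matrix

variable {l m n : Type*}

theorem toBlocks₁₁_inv_fromBlocks [Fintype l] [Fintype m] [DecidableEq l] [DecidableEq m]
    {α : Type*} [CommRing α] (A : Matrix l l α) (B : Matrix l m α) (C : Matrix m l α)
    (D : Matrix m m α) [Invertible D] [Invertible (fromBlocks A B C D)] :
    (fromBlocks A B C D)⁻¹.toBlocks₁₁ = (A - B * D⁻¹ * C)⁻¹ := by
  let := invertibleOfFromBlocks₂₂Invertible A B C D
  rw [← invOf_eq_nonsing_inv, invOf_fromBlocks₂₂_eq, toBlocks_fromBlocks₁₁, invOf_eq_nonsing_inv,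
    invOf_eq_nonsing_inv]

theorem PosDef.schur_complement₂₂ [Fintype l] [Fintype m] [DecidableEq m] {𝕜 : Type*} [RCLike 𝕜]
    {A : Matrix l l 𝕜} {B : Matrix l m 𝕜} {D : Matrix m m 𝕜}
    (hG : (fromBlocks A B Bᴴ D).PosDef) (hD : D.PosDef) : (A - B * D⁻¹ * Bᴴ).PosDef := by
  let := hD.isUnit.invertible
  refine .of_dotProduct_mulVec_pos
    ((IsHermitian.fromBlocks₂₂ A B hD.isHermitian).mp hG.isHermitian) fun x hx => ?_
  have hv : (x ⊕ᵥ -((D⁻¹ * Bᴴ) *ᵥ x)) ≠ 0 := fun h => hx (funext fun i => congrFun h (Sum.inl i))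
  have := hG.dotProduct_mulVec_pos hv
  rwa [dotProduct_mulVec, schur_complement_eq₂₂ A B x _ hD.isHermitian, add_neg_cancel,
    dotProduct_zero, zero_add, ← dotProduct_mulVec] at this

theorem transpose_mul_mul_apply [Fintype n] {α : Type*} [CommSemiring α] (C : Matrix n l α)
    (P : Matrix n n α) (i j : l) : (Cᵀ * P * C) i j = Cᵀ i ⬝ᵥ P *ᵥ Cᵀ j := by
  rw [Matrix.mul_assoc, mul_apply, dotProduct]
  simp only [transpose_apply, mul_apply, mulVec, dotProduct]

theorem inv_apply_zero_one_fin_two {K : Type*} [Field K] (S : Matrix (Fin 2) (Fin 2) K) :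
    S⁻¹ 0 1 = -S 0 1 / S.det := by
  simp [inv_def, adjugate_fin_two, Ring.inverse_eq_inv', div_eq_inv_mul]

theorem fromCols_transpose_mul_self_add_smul_one [Fintype n] [DecidableEq l] [DecidableEq m]
    {α : Type*} [CommRing α] (η : α) (C : Matrix n l α) (R : Matrix n m α) :
    (fromCols C R)ᵀ * fromCols C R + η • 1 =
      fromBlocks (Cᵀ * C + η • 1) (Cᵀ * R) (Rᵀ * C) (Rᵀ * R + η • 1) := by
  rw [transpose_fromCols, fromRows_mul_fromCols, ← fromBlocks_one, fromBlocks_smul,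
    fromBlocks_add]
  simp

theorem posDef_transpose_mul_self_add_smul_one [Fintype m] [Fintype n] [DecidableEq n]
    (M : Matrix m n ℝ) {η : ℝ} (hη : 0 < η) : (Mᵀ * M + η • 1).PosDef := by
  rw [← conjTranspose_eq_transpose_of_trivial]
  exact PosDef.posSemidef_add (posSemidef_conjTranspose_mul_self M) (PosDef.one.smul hη)

section Ridge

variable [Fintype m] [Fintype n] [DecidableEq m] [DecidableEq n]

noncomputable def ridgeResidual {α : Type*} [CommRing α] (η : α) (R : Matrix n m α) :
    Matrix n n α :=
  1 - R * (Rᵀ * R + η • 1)⁻¹ * Rᵀ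

theorem sub_mul_inv_mul_eq_ridgeResidual [DecidableEq l] {α : Type*} [CommRing α] (η : α)
    (C : Matrix n l α) (R : Matrix n m α) :
    Cᵀ * C + η • 1 - Cᵀ * R * (Rᵀ * R + η • 1)⁻¹ * (Rᵀ * C) =
      Cᵀ * ridgeResidual η R * C + η • 1 := by
  simp only [ridgeResidual, Matrix.mul_sub, Matrix.sub_mul, Matrix.mul_one, Matrix.mul_assoc]
  abel

variable [Fintype l] [DecidableEq l] {η : ℝ} (hη : 0 < η) (C : Matrix n l ℝ) (R : Matrix n m ℝ)
include hη

theorem posDef_transpose_mul_ridgeResidual_mul_add_smul_one :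
    (Cᵀ * ridgeResidual η R * C + η • 1).PosDef := by
  have hG := posDef_transpose_mul_self_add_smul_one (fromCols C R) hη
  have hBH : (Cᵀ * R)ᴴ = Rᵀ * C := by
    rw [conjTranspose_eq_transpose_of_trivial, transpose_mul, transpose_transpose]
  rw [fromCols_transpose_mul_self_add_smul_one, ← hBH] at hG
  have hS := hG.schur_complement₂₂ (posDef_transpose_mul_self_add_smul_one R hη)
  rwa [hBH, sub_mul_inv_mul_eq_ridgeResidual] at hS

theorem toBlocks₁₁_inv_transpose_fromCols_mul_self_add_smul_one :
    ((fromCols C R)ᵀ * fromCols C R + η • 1)⁻¹.toBlocks₁₁ =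
      (Cᵀ * ridgeResidual η R * C + η • 1)⁻¹ := by
  have hG := posDef_transpose_mul_self_add_smul_one (fromCols C R) hη
  let := hG.isUnit.invertible
  let := (posDef_transpose_mul_self_add_smul_one R hη).isUnit.invertible
  rw [fromCols_transpose_mul_self_add_smul_one] at *
  rw [toBlocks₁₁_inv_fromBlocks, sub_mul_inv_mul_eq_ridgeResidual]

end Ridge

end Matrix

namespace Real

theorem sign_div_of_pos {a d : ℝ} (hd : 0 < d) : sign (a / d) = sign a := by
  rcases lt_trichotomy a 0 with ha | rfl | ha
  · rw [sign_of_neg ha, sign_of_neg (div_neg_of_neg_of_pos ha hd)]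
  · rw [zero_div]
  · rw [sign_of_pos ha, sign_of_pos (div_pos ha hd)]

end Real

/-- Feature repulsion: for `F̃ = [f̃₁, f̃₂, F̃ᵣ]`, `η > 0`, `G = F̃ᵀF̃ + ηI` and
`P = I - F̃ᵣ(F̃ᵣᵀF̃ᵣ + ηI)⁻¹F̃ᵣᵀ`, the `(1,2)` entry of `G⁻¹` equals
`-(f̃₁ᵀPf̃₂) / [(η + f̃₁ᵀPf̃₁)(η + f̃₂ᵀPf̃₂) - (f̃₁ᵀPf̃₂)²]`, and in particular has sign
opposite to `f̃₁ᵀPf̃₂`. -/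
theorem stmt17 (n m : ℕ) (f1 f2 : Fin n → ℝ) (Fr : Matrix (Fin n) (Fin m) ℝ)
    (η : ℝ) (hη : 0 < η)
    (F : Matrix (Fin n) (Fin 2 ⊕ Fin m) ℝ)
    (hF : F = Matrix.of fun i j =>
      Sum.elim (fun j2 : Fin 2 => if j2 = 0 then f1 i else f2 i) (fun jr => Fr i jr) j)
    (Gm : Matrix (Fin 2 ⊕ Fin m) (Fin 2 ⊕ Fin m) ℝ) (hGm : Gm = Fᵀ * F + η • 1)
    (P : Matrix (Fin n) (Fin n) ℝ)
    (hP : P = 1 - Fr * (Frᵀ * Fr + η • 1)⁻¹ * Frᵀ) :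
    Gm⁻¹ (Sum.inl 0) (Sum.inl 1) =
      -(f1 ⬝ᵥ (P *ᵥ f2)) /
        ((η + f1 ⬝ᵥ (P *ᵥ f1)) * (η + f2 ⬝ᵥ (P *ᵥ f2)) - (f1 ⬝ᵥ (P *ᵥ f2)) ^ 2) ∧
    Real.sign (Gm⁻¹ (Sum.inl 0) (Sum.inl 1)) = -Real.sign (f1 ⬝ᵥ (P *ᵥ f2)) := by
  set C : Matrix (Fin n) (Fin 2) ℝ := .of fun i j => if j = 0 then f1 i else f2 i
  have hC0 : Cᵀ 0 = f1 := by ext; simp [C]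
  have hC1 : Cᵀ 1 = f2 := by ext; simp [C]
  have hFC : F = fromCols C Fr := by
    rw [hF]; ext i (j | j) <;> rfl
  obtain rfl : P = ridgeResidual η Fr := hP
  set S := Cᵀ * ridgeResidual η Fr * C + η • 1 with hSdef
  have hSpd : S.PosDef := posDef_transpose_mul_ridgeResidual_mul_add_smul_one hη C Fr
  have hS : ∀ i j, S i j = Cᵀ i ⬝ᵥ ridgeResidual η Fr *ᵥ Cᵀ j + if i = j then η else 0 := by
    intro i j
    rw [hSdef, Matrix.add_apply, transpose_mul_mul_apply, Matrix.smul_apply, one_apply]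
    split_ifs <;> simp
  have hentry : Gm⁻¹ (Sum.inl 0) (Sum.inl 1) = -S 0 1 / S.det := by
    rw [← inv_apply_zero_one_fin_two, ← toBlocks₁₁_inv_transpose_fromCols_mul_self_add_smul_one hη,
      ← hFC, ← hGm]
    rfl
  have hS01 : S 0 1 = f1 ⬝ᵥ ridgeResidual η Fr *ᵥ f2 := by simp [hS, hC0, hC1]
  have hS10 : S 1 0 = S 0 1 := hSpd.isHermitian.apply 0 1
  have hdet : S.det = (η + f1 ⬝ᵥ ridgeResidual η Fr *ᵥ f1) * (η + f2 ⬝ᵥ ridgeResidual η Fr *ᵥ f2)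
      - (f1 ⬝ᵥ ridgeResidual η Fr *ᵥ f2) ^ 2 := by
    rw [det_fin_two, hS10, hS01, hS 0 0, hS 1 1, hC0, hC1, if_pos rfl, if_pos rfl]
    ring
  refine ⟨by rw [hentry, hdet, hS01], ?_⟩
  rw [hentry, Real.sign_div_of_pos hSpd.det_pos, Real.sign_neg, hS01]
end
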